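/- Let F be a filter on ω extending the cofinite filter. For any analytic set A ⊆ ω^ω, either there exists a tree H ∈ H_F with [H] ∩ A = ∅, or there exists a tree L ∈ L_F with [L] ⊆ A. -/

import Mathlib

/-- The restriction `x↾n` of `x : ℕ → ℕ` to its first `n` values, as a finite sequence. -/
def res (x : ℕ → ℕ) (n : ℕ) : List ℕ := List.ofFn fun i : Fin n => x i

/-- A subtree of `ω^{<ω}`: a set of finite sequences closed under initial segments. -/
def IsSubtree (T : Set (List ℕ)) : Prop := ∀ s ∈ T, ∀ t : List ℕ, t <+: s → t ∈ T

/-- `[T]`, the set of branches of a subtree `T`. -/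
def branches (T : Set (List ℕ)) : Set (ℕ → ℕ) := {x | ∀ n, res x n ∈ T}

/-- `H ∈ H_F`: a nonempty subtree each of whose nodes splits along a set in `F`. -/
def MemHechlerF (F : Filter ℕ) (H : Set (List ℕ)) : Prop :=
  IsSubtree H ∧ [] ∈ H ∧ ∀ s ∈ H, {n : ℕ | s ++ [n] ∈ H} ∈ F

/-- `L ∈ L_F`: a nonempty subtree each of whose nodes splits along an `F`-positive set. -/
def MemLaverF (F : Filter ℕ) (L : Set (List ℕ)) : Prop :=
  IsSubtree L ∧ [] ∈ L ∧ ∀ s ∈ L, {n : ℕ | s ++ [n] ∈ L}ᶜ ∉ F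

/-- A set `A ⊆ ω^ω` is analytic iff it is a continuous image of a closed subset of `ω^ω`. -/
def IsAnalytic (A : Set (ℕ → ℕ)) : Prop :=
  ∃ (C : Set (ℕ → ℕ)) (f : (ℕ → ℕ) → (ℕ → ℕ)),
    IsClosed C ∧ ContinuousOn f C ∧ A = f '' C

/-!
Write `A` as the projection of `[T]` for a set `T` of pairs of finite sequences. Call a node `v`
with a "tether" `t` large when the points of `A` through `v` that are witnessed through `t`
cannot all escape one `F`-slalom above level `|v|`. If the root is not large, the slalom itself
is an `H_F` tree avoiding `A`. Otherwise largeness propagates along `F`-positive sets of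
successors, and an ordinal rank (the stage of a least fixed point) shows that a large pair either
admits a large lengthening of its tether, or has `F`-positively many large successors of smaller
rank. The Laver tree follows these successors while carrying the tether; the rank cannot drop
forever along a branch, so the tethers grow without bound and glue to a witness for the branch.
-/

open Filter Set

section Restriction

variable (x : ℕ → ℕ)

@[simp]
lemma res_length (n : ℕ) : (res x n).length = n := by simp [res]

@[simp]
lemma getElem_res {n i : ℕ} (h : i < (res x n).length) : (res x n)[i] = x i := by
  simp [res]

lemma res_succ (n : ℕ) : res x (n + 1) = res x n ++ [x n] := by
  rw [res, List.ofFn_succ']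
  simp [res]

lemma res_take {j n : ℕ} (h : j ≤ n) : (res x n).take j = res x j :=
  List.ext_getElem (by simpa using h) fun i _ _ => by simp

lemma res_eq_res_iff {y : ℕ → ℕ} {n : ℕ} : res x n = res y n ↔ ∀ i < n, x i = y i := by
  simp [res, List.ofFn_inj, funext_iff, Fin.forall_iff]

end Restriction

lemma exists_res_eq_of_prefix_chain {t : ℕ → List ℕ} (hchain : ∀ j k, j ≤ k → t j <+: t k)
    (hunb : ∀ N, ∃ k, N ≤ (t k).length) : ∃ y : ℕ → ℕ, ∀ k, res y (t k).length = t k := by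
  have hagree : ∀ i j k (hj : i < (t j).length) (hk : i < (t k).length), (t j)[i] = (t k)[i] := by
    intro i j k hj hk
    rcases le_total j k with h | h
    · exact (hchain j k h).getElem hj
    · exact ((hchain k j h).getElem hk).symm
  choose φ hφ using fun i => hunb (i + 1)
  refine ⟨fun i => (t (φ i))[i]'(hφ i), fun k => List.ext_getElem (by simp) fun i hi hk => ?_⟩
  simpa using hagree i (φ i) k (hφ i) hk

def Obeys (S : List ℕ → Set ℕ) (m : ℕ) (x : ℕ → ℕ) : Prop :=
  ∀ k, m ≤ k → x k ∈ S (res x k)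

lemma Obeys.mono {S S' : List ℕ → Set ℕ} {m m' : ℕ} {x : ℕ → ℕ} (h : Obeys S m x)
    (hm : m ≤ m') (hS : ∀ k, m' ≤ k → S (res x k) ⊆ S' (res x k)) : Obeys S' m' x :=
  fun k hk => hS k hk (h k (hm.trans hk))

section SlalomTree

variable (S : List ℕ → Set ℕ)

def slalomTree : Set (List ℕ) := {s | ∀ j (h : j < s.length), s[j] ∈ S (s.take j)}

lemma nil_mem_slalomTree : [] ∈ slalomTree S := fun _ h => absurd h (Nat.not_lt_zero _)

lemma isSubtree_slalomTree : IsSubtree (slalomTree S) := by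
  intro s hs w hw j hj
  have hjs : j < s.length := hj.trans_le hw.length_le
  have htake : w.take j = s.take j := by
    rw [List.prefix_iff_eq_take.1 hw, List.take_take, min_eq_left hj.le]
  rw [hw.getElem hj, htake]
  exact hs j hjs

lemma concat_mem_slalomTree_iff {s : List ℕ} (hs : s ∈ slalomTree S) (n : ℕ) :
    s ++ [n] ∈ slalomTree S ↔ n ∈ S s := by
  refine ⟨fun h => by simpa using h s.length (by simp), fun hn j hj => ?_⟩
  rcases (Nat.lt_succ_iff.1 (by simpa using hj)).lt_or_eq with h | rfl
  · rw [List.take_append_of_le_length h.le, List.getElem_append_left h]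
    exact hs j h
  · simpa using hn

lemma mem_branches_slalomTree_iff {x : ℕ → ℕ} : x ∈ branches (slalomTree S) ↔ Obeys S 0 x := by
  refine ⟨fun h k _ => ?_, fun h n j hj => ?_⟩
  · simpa [res_take x k.le_succ] using h (k + 1) k (by simp)
  · have hjn : j < n := by simpa using hj
    simpa [res_take x hjn.le] using h j j.zero_le

lemma memHechlerF_slalomTree {F : Filter ℕ} (hS : ∀ s, S s ∈ F) : MemHechlerF F (slalomTree S) :=
  ⟨isSubtree_slalomTree S, nil_mem_slalomTree S, fun s hs => by
    simpa only [concat_mem_slalomTree_iff S hs, Set.ofPred_mem_eq] using hS s⟩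

lemma memLaverF_slalomTree {F : Filter ℕ} (hS : ∀ s ∈ slalomTree S, ∃ᶠ n in F, n ∈ S s) :
    MemLaverF F (slalomTree S) :=
  ⟨isSubtree_slalomTree S, nil_mem_slalomTree S, fun s hs =>
    (hS s hs).mono fun n => (concat_mem_slalomTree_iff S hs n).2⟩

end SlalomTree

lemma tendsto_of_res_eq {g : ℕ → ℕ → ℕ} {w : ℕ → ℕ} (h : ∀ k, res (g k) k = res w k) :
    Tendsto g atTop (nhds w) := by
  refine tendsto_pi_nhds.2 fun i => tendsto_const_nhds.congr' ?_
  filter_upwards [eventually_gt_atTop i] with k hk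
  exact (res_eq_res_iff (g k)).1 (h k) i hk |>.symm

def IsWitness (T : Set (List ℕ × List ℕ)) (x y : ℕ → ℕ) : Prop := ∀ k, (res x k, res y k) ∈ T

lemma IsAnalytic.exists_tree {A : Set (ℕ → ℕ)} (hA : IsAnalytic A) :
    ∃ T : Set (List ℕ × List ℕ), A = {x | ∃ y, IsWitness T x y} := by
  obtain ⟨C, f, hC, hf, rfl⟩ := hA
  refine ⟨{p | ∃ z ∈ C, res z p.1.length = p.2 ∧ res (f z) p.1.length = p.1}, ?_⟩
  ext x
  refine ⟨?_, fun ⟨y, hy⟩ => ?_⟩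
  · rintro ⟨z, hz, rfl⟩
    exact ⟨z, fun k => ⟨z, hz, by simp, by simp⟩⟩
  · choose z hzC hzy hzx using fun k => by simpa using hy k
    have hz : Tendsto z atTop (nhds y) := tendsto_of_res_eq hzy
    have hyC : y ∈ C := hC.mem_of_tendsto hz (Eventually.of_forall hzC)
    have hfz : Tendsto (fun k => f (z k)) atTop (nhds (f y)) :=
      (hf y hyC).tendsto.comp (tendsto_nhdsWithin_iff.2 ⟨hz, Eventually.of_forall hzC⟩)
    exact ⟨y, hyC, tendsto_nhds_unique hfz (tendsto_of_res_eq hzx)⟩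

namespace OrdinalApprox

universe u

variable {α : Type u} (f : Set α →o Set α)

noncomputable def lfpRank (p : α) : Ordinal.{u} := sInf {a | p ∈ f (lfpApprox f ⊥ a)}

lemma mem_lfpApprox_iff {p : α} {a : Ordinal.{u}} :
    p ∈ lfpApprox f ⊥ a ↔ ∃ b < a, p ∈ f (lfpApprox f ⊥ b) := by
  rw [lfpApprox]
  simp

lemma mem_apply_lfpApprox_lfpRank {p : α} (h : p ∈ f.lfp) :
    p ∈ f (lfpApprox f ⊥ (lfpRank f p)) := by
  rw [← lfpApprox_ord_eq_lfp, mem_lfpApprox_iff] at h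
  obtain ⟨b, -, hb⟩ := h
  exact csInf_mem (⟨b, hb⟩ : {a | p ∈ f (lfpApprox f ⊥ a)}.Nonempty)

lemma lfpRank_lt_of_mem_lfpApprox {p : α} {a : Ordinal.{u}} (h : p ∈ lfpApprox f ⊥ a) :
    lfpRank f p < a := by
  obtain ⟨b, hba, hb⟩ := (mem_lfpApprox_iff f).1 h
  exact (csInf_le' (show b ∈ {a | p ∈ f (lfpApprox f ⊥ a)} from hb)).trans_lt hba

end OrdinalApprox

namespace HechlerLaver

open OrdinalApprox

variable (F : Filter ℕ) (T : Set (List ℕ × List ℕ))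

def cone (v t : List ℕ) : Set (ℕ → ℕ) :=
  {x | res x v.length = v ∧ ∃ y, res y t.length = t ∧ IsWitness T x y}

def Large (v t : List ℕ) : Prop :=
  ∀ S : List ℕ → Set ℕ, (∀ u, S u ∈ F) → ∃ x ∈ cone T v t, Obeys S v.length x

variable {F T}

lemma mem_cone_res {x y : ℕ → ℕ} {t : List ℕ} (hy : res y t.length = t) (hw : IsWitness T x y)
    (k : ℕ) : x ∈ cone T (res x k) t :=
  ⟨by simp, y, hy, hw⟩

lemma take_mem_of_mem_cone {x : ℕ → ℕ} {v t : List ℕ} (hx : x ∈ cone T v t) {j : ℕ}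
    (hv : j ≤ v.length) (ht : j ≤ t.length) : (v.take j, t.take j) ∈ T := by
  obtain ⟨hxv, y, hyt, hw⟩ := hx
  rw [← hxv, ← hyt, res_take x hv, res_take y ht]
  exact hw j

lemma Large.nonempty_cone {v t : List ℕ} (h : Large F T v t) : (cone T v t).Nonempty :=
  let ⟨x, hx, _⟩ := h (fun _ => univ) fun _ => univ_mem
  ⟨x, hx⟩

lemma exists_escape_of_not_large {v t : List ℕ} (h : ¬ Large F T v t) :
    ∃ S : List ℕ → Set ℕ, (∀ u, S u ∈ F) ∧ ∀ x ∈ cone T v t, ¬ Obeys S v.length x := by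
  simpa [Large] using h

variable (F T)

open Classical in
noncomputable def escape (v t : List ℕ) : List ℕ → Set ℕ :=
  if h : Large F T v t then fun _ => univ else (exists_escape_of_not_large h).choose

lemma escape_mem (v t u : List ℕ) : escape F T v t u ∈ F := by
  unfold escape
  split_ifs with h
  · exact univ_mem
  · exact (exists_escape_of_not_large h).choose_spec.1 u

lemma not_obeys_escape {v t : List ℕ} (h : ¬ Large F T v t) {x : ℕ → ℕ} (hx : x ∈ cone T v t) :
    ¬ Obeys (escape F T v t) v.length x := by
  unfold escape
  rw [dif_neg h]
  exact (exists_escape_of_not_large h).choose_spec.2 x hx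

def escapeAll (t u : List ℕ) : Set ℕ := ⋂ j ∈ Iic u.length, escape F T (u.take j) t u

lemma escapeAll_mem (t u : List ℕ) : escapeAll F T t u ∈ F :=
  (biInter_mem (finite_Iic _)).2 fun _ _ => escape_mem F T _ _ _

variable {F T}

lemma large_of_obeys_escapeAll {x : ℕ → ℕ} {t : List ℕ} {k : ℕ} (hx : x ∈ cone T (res x k) t)
    (h : Obeys (escapeAll F T t) k x) : Large F T (res x k) t := by
  by_contra hl
  refine not_obeys_escape F T hl hx (h.mono (by simp) fun j hj n hn => ?_)
  have hj' : k ≤ j := by simpa using hj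
  simpa [res_take x hj'] using mem_iInter₂.1 hn k (by simpa using hj')

lemma Large.frequently_large_concat {v t : List ℕ} (h : Large F T v t) :
    ∃ᶠ n in F, Large F T (v ++ [n]) t := by
  intro hW
  obtain ⟨x, ⟨hxv, y, hy, hw⟩, hx⟩ :=
    h (fun u => {n | ¬ Large F T (v ++ [n]) t} ∩ escapeAll F T t u)
      fun u => inter_mem hW (escapeAll_mem F T t u)
  have hnot : ¬ Large F T (res x (v.length + 1)) t := by
    rw [res_succ, hxv]
    exact (hx v.length le_rfl).1
  exact hnot (large_of_obeys_escapeAll (mem_cone_res hy hw _)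
    (hx.mono v.length.le_succ fun _ _ => inter_subset_right))

variable (F T)

def rankOp : Set (List ℕ × List ℕ) →o Set (List ℕ × List ℕ) where
  toFun X := {p | (∃ m, Large F T p.1 (p.2 ++ [m])) ∨
    ∃ᶠ n in F, Large F T (p.1 ++ [n]) p.2 ∧ (p.1 ++ [n], p.2) ∈ X}
  monotone' _ _ h _ := Or.imp_right fun hp => hp.mono fun _ hn => ⟨hn.1, h hn.2⟩

variable {F T}

lemma mem_rankOp_iff {X : Set (List ℕ × List ℕ)} {p : List ℕ × List ℕ} :
    p ∈ rankOp F T X ↔ (∃ m, Large F T p.1 (p.2 ++ [m])) ∨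
      ∃ᶠ n in F, Large F T (p.1 ++ [n]) p.2 ∧ (p.1 ++ [n], p.2) ∈ X :=
  Iff.rfl

lemma notMem_lfp_rankOp_iff {u t : List ℕ} : (u, t) ∉ (rankOp F T).lfp ↔
    (∀ m, ¬ Large F T u (t ++ [m])) ∧
      ∀ᶠ n in F, ¬ (Large F T (u ++ [n]) t ∧ (u ++ [n], t) ∈ (rankOp F T).lfp) := by
  nth_rw 1 [← OrderHom.map_lfp]
  rw [mem_rankOp_iff]
  simp only [not_or, not_exists, not_frequently]

lemma Large.mem_lfp_rankOp {v t : List ℕ} (h : Large F T v t) : (v, t) ∈ (rankOp F T).lfp := by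
  set G := (rankOp F T).lfp
  by_contra hvt
  -- `c` forces a branch through pairs outside `G` to stay outside `G`.
  let c (u : List ℕ) : Set ℕ := {n | Large F T (u ++ [n]) t ∧ (u ++ [n], t) ∈ G → (u, t) ∈ G}
  have hc : ∀ u, c u ∈ F := fun u => by
    by_cases hu : (u, t) ∈ G
    · exact mem_of_superset univ_mem fun _ _ _ => hu
    · exact (notMem_lfp_rankOp_iff.1 hu).2.mono fun _ hn h => absurd h hn
  obtain ⟨x, ⟨hxv, y, hy, hw⟩, hx⟩ :=
    h (fun u => c u ∩ (escapeAll F T t u ∩ ⋂ m ∈ Iic u.length, escapeAll F T (t ++ [m]) u))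
      fun u => inter_mem (hc u) (inter_mem (escapeAll_mem F T t u)
        ((biInter_mem (finite_Iic _)).2 fun m _ => escapeAll_mem F T _ u))
  by_cases hall : ∀ k, v.length ≤ k → Large F T (res x k) t
  · have hout : ∀ k, v.length ≤ k → (res x k, t) ∉ G := by
      intro k hk
      induction k, hk using Nat.le_induction with
      | base => rwa [hxv]
      | succ k hk ih =>
        rw [res_succ]
        exact fun hG => ih ((hx k hk).1 ⟨res_succ x k ▸ hall (k + 1) (by omega), hG⟩)
    -- Along `x` the witness `y` eventually offers the tether extension `t ++ [y |t|]`.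
    set k₀ := max v.length (y t.length)
    refine (notMem_lfp_rankOp_iff.1 (hout k₀ (le_max_left _ _))).1 (y t.length)
      (large_of_obeys_escapeAll (mem_cone_res (by simp [res_succ, hy]) hw k₀)
        (hx.mono (le_max_left _ _) fun k hk => ?_))
    exact inter_subset_right.trans <| inter_subset_right.trans <|
      biInter_subset_of_mem (by simpa using (le_max_right _ _).trans hk)
  · push Not at hall
    obtain ⟨k, hk, hnot⟩ := hall
    exact hnot (large_of_obeys_escapeAll (mem_cone_res hy hw k)
      (hx.mono hk fun _ _ => inter_subset_right.trans inter_subset_left))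

lemma Large.frequently_lfpRank_lt {v t : List ℕ} (h : Large F T v t)
    (hext : ¬ ∃ m, Large F T v (t ++ [m])) :
    ∃ᶠ n in F, Large F T (v ++ [n]) t ∧
      lfpRank (rankOp F T) (v ++ [n], t) < lfpRank (rankOp F T) (v, t) := by
  rcases mem_rankOp_iff.1 (mem_apply_lfpApprox_lfpRank _ h.mem_lfp_rankOp) with hext' | hfreq
  · exact absurd hext' hext
  · exact hfreq.mono fun _ hn => ⟨hn.1, lfpRank_lt_of_mem_lfpApprox _ hn.2⟩

variable (F T)

open Classical in
noncomputable def extendTether (v t : List ℕ) : List ℕ :=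
  if h : ∃ m, Large F T v (t ++ [m]) then t ++ [h.choose] else t

open Classical in
noncomputable def succSet (v t : List ℕ) : Set ℕ :=
  if ∃ m, Large F T v (t ++ [m]) then {n | Large F T (v ++ [n]) (extendTether F T v t)}
  else {n | Large F T (v ++ [n]) t ∧
    lfpRank (rankOp F T) (v ++ [n], t) < lfpRank (rankOp F T) (v, t)}

noncomputable def tether : List ℕ → List ℕ
  | [] => []
  | a :: l => extendTether F T (a :: l).dropLast (tether (a :: l).dropLast)
termination_by v => v.length
decreasing_by simp

noncomputable def laverTree : Set (List ℕ) := slalomTree fun v => succSet F T v (tether F T v)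

variable {F T}

lemma tether_concat (v : List ℕ) (n : ℕ) :
    tether F T (v ++ [n]) = extendTether F T v (tether F T v) := by
  obtain ⟨a, l, h⟩ := List.exists_cons_of_ne_nil (List.append_ne_nil_of_right_ne_nil v
    (List.cons_ne_nil n []))
  rw [h, tether, ← h, List.dropLast_concat]

lemma prefix_extendTether (v t : List ℕ) : t <+: extendTether F T v t := by
  unfold extendTether
  split_ifs
  · exact List.prefix_append _ _
  · exact List.prefix_rfl

lemma Large.extendTether {v t : List ℕ} (h : Large F T v t) : Large F T v (extendTether F T v t) := by
  unfold HechlerLaver.extendTether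
  split_ifs with hext
  · exact hext.choose_spec
  · exact h

lemma large_concat_of_mem_succSet {v t : List ℕ} {n : ℕ} (hn : n ∈ succSet F T v t) :
    Large F T (v ++ [n]) (extendTether F T v t) := by
  unfold succSet at hn
  split_ifs at hn with hext
  · exact hn
  · simpa [HechlerLaver.extendTether, hext] using hn.1

lemma Large.frequently_mem_succSet {v t : List ℕ} (h : Large F T v t) :
    ∃ᶠ n in F, n ∈ succSet F T v t := by
  unfold succSet
  split_ifs with hext
  · exact h.extendTether.frequently_large_concat
  · exact h.frequently_lfpRank_lt hext

lemma extendTether_length_or_lfpRank_lt {v t : List ℕ} {n : ℕ} (hn : n ∈ succSet F T v t) :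
    (extendTether F T v t).length = t.length + 1 ∨ (extendTether F T v t = t ∧
      lfpRank (rankOp F T) (v ++ [n], t) < lfpRank (rankOp F T) (v, t)) := by
  unfold succSet at hn
  unfold HechlerLaver.extendTether
  split_ifs at hn ⊢ with hext
  · simp
  · exact Or.inr ⟨rfl, hn.2⟩

lemma large_tether (hroot : Large F T [] []) {v : List ℕ} (hv : v ∈ laverTree F T) :
    Large F T v (tether F T v) := by
  rcases List.eq_nil_or_concat' v with rfl | ⟨w, n, rfl⟩
  · rwa [tether]
  · have hw : w ∈ laverTree F T :=
      isSubtree_slalomTree _ _ hv w (List.prefix_append w [n])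
    rw [tether_concat]
    exact large_concat_of_mem_succSet ((concat_mem_slalomTree_iff _ hw n).1 hv)

lemma memLaverF_laverTree (hroot : Large F T [] []) : MemLaverF F (laverTree F T) :=
  memLaverF_slalomTree _ fun _ hv => (large_tether hroot hv).frequently_mem_succSet

lemma tether_res_succ (x : ℕ → ℕ) (k : ℕ) :
    tether F T (res x (k + 1)) = extendTether F T (res x k) (tether F T (res x k)) := by
  rw [res_succ, tether_concat]

lemma tether_res_prefix (x : ℕ → ℕ) {j k : ℕ} (h : j ≤ k) :
    tether F T (res x j) <+: tether F T (res x k) := by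
  induction k, h using Nat.le_induction with
  | base => exact List.prefix_rfl
  | succ k _ ih => exact ih.trans (tether_res_succ x k ▸ prefix_extendTether _ _)

/-- If the tethers along `x` stayed shorter than `N`, then `(N - |tether|, rank)` would
decrease lexicographically forever. -/
lemma exists_le_length_tether {x : ℕ → ℕ} (hx : x ∈ branches (laverTree F T)) (N : ℕ) :
    ∃ k, N ≤ (tether F T (res x k)).length := by
  by_contra! hN
  refine not_strictAnti_of_wellFoundedLT (fun k => toLex (N - (tether F T (res x k)).length,
    lfpRank (rankOp F T) (res x k, tether F T (res x k)))) (strictAnti_nat_of_succ_lt fun k => ?_)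
  have hk := (mem_branches_slalomTree_iff _).1 hx k k.zero_le
  rw [Prod.Lex.toLex_lt_toLex, tether_res_succ]
  rcases extendTether_length_or_lfpRank_lt hk with hlen | ⟨heq, hlt⟩
  · have := hN (k + 1)
    rw [tether_res_succ, hlen] at this
    left
    simp only [hlen]
    omega
  · right
    rw [heq, res_succ]
    exact ⟨rfl, hlt⟩

lemma branches_laverTree_subset (hroot : Large F T [] []) :
    branches (laverTree F T) ⊆ {x | ∃ y, IsWitness T x y} := by
  intro x hx
  obtain ⟨y, hy⟩ := exists_res_eq_of_prefix_chain (fun _ _ => tether_res_prefix x)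
    (exists_le_length_tether hx)
  refine ⟨y, fun j => ?_⟩
  obtain ⟨k, hk⟩ := exists_le_length_tether hx j
  set k' := max j k
  have hk' : j ≤ (tether F T (res x k')).length :=
    hk.trans (tether_res_prefix x (le_max_right j k)).length_le
  obtain ⟨x', hx'⟩ := (large_tether hroot (hx k')).nonempty_cone
  have hmem := take_mem_of_mem_cone hx' (by simp [k']) hk'
  rwa [res_take x (le_max_left j k), ← hy k', res_take y hk'] at hmem

lemma exists_memLaverF_subset (hroot : Large F T [] []) :
    ∃ L, MemLaverF F L ∧ branches L ⊆ {x | ∃ y, IsWitness T x y} :=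
  ⟨laverTree F T, memLaverF_laverTree hroot, branches_laverTree_subset hroot⟩

lemma exists_memHechlerF_disjoint (hroot : ¬ Large F T [] []) :
    ∃ H, MemHechlerF F H ∧ branches H ∩ {x | ∃ y, IsWitness T x y} = ∅ := by
  obtain ⟨S, hSF, hS⟩ := exists_escape_of_not_large hroot
  refine ⟨slalomTree S, memHechlerF_slalomTree S hSF, eq_empty_iff_forall_notMem.2 ?_⟩
  rintro x ⟨hxS, y, hy⟩
  exact hS x ⟨rfl, y, rfl, hy⟩ ((mem_branches_slalomTree_iff S).1 hxS)

end HechlerLaver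

theorem hechler_laver_dichotomy_filter_general (F : Filter ℕ)
    (A : Set (ℕ → ℕ)) (hA : IsAnalytic A) :
    (∃ H : Set (List ℕ), MemHechlerF F H ∧ branches H ∩ A = ∅) ∨
    (∃ L : Set (List ℕ), MemLaverF F L ∧ branches L ⊆ A) := by
  obtain ⟨T, rfl⟩ := hA.exists_tree
  by_cases hroot : HechlerLaver.Large F T [] []
  · exact Or.inr (HechlerLaver.exists_memLaverF_subset hroot)
  · exact Or.inl (HechlerLaver.exists_memHechlerF_disjoint hroot)

theorem hechler_laver_dichotomy_filter (F : Filter ℕ) [F.NeBot] (hF : F ≤ Filter.cofinite)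
    (A : Set (ℕ → ℕ)) (hA : IsAnalytic A) :
    (∃ H : Set (List ℕ), MemHechlerF F H ∧ branches H ∩ A = ∅) ∨
    (∃ L : Set (List ℕ), MemLaverF F L ∧ branches L ⊆ A) :=
  hechler_laver_dichotomy_filter_general F A hA
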